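/- Let ρ be a positive semidefinite complex matrix of trace 1 indexed by (Fin dA) × (Fin dB) that is separable, i.e., there exist finitely many weights p_i ≥ 0 with ∑_i p_i = 1 and positive semidefinite trace-one matrices ρ_{A,i} (of size dA) and ρ_{B,i} (of size dB) such that ρ = ∑_i p_i (ρ_{A,i} ⊗ ρ_{B,i}) (Kronecker product). Let ρ_A be the partial trace of ρ over the second factor, (ρ_A)_{a,a'} = ∑_{b} ρ_{(a,b),(a',b)}. Then for every positive integer k and every orthogonal projection Q on ℂ^{dA} ⊗ ℂ^{dB} of rank k, one has Tr(Q ρ) ≤ max{ Tr(P ρ_A) : P an orthogonal projection on ℂ^{dA} of rank min(k, dA) }. -/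

import Mathlib

open Finset Matrix
open scoped Kronecker ComplexOrder

namespace NKaux

set_option linter.unusedSectionVars false
variable {n : Type*} [Fintype n] [DecidableEq n]

lemma psd_of_herm_idem {M : Matrix n n ℂ} (hH : M.IsHermitian) (hI : M * M = M) :
    M.PosSemidef := by
  have : M = Mᴴ * M := by rw [hH.eq, hI]
  rw [this]
  exact Matrix.posSemidef_conjTranspose_mul_self M

lemma herm_one_sub {M : Matrix n n ℂ} (hH : M.IsHermitian) : (1 - M).IsHermitian := by
  simpa using (Matrix.isHermitian_one (n := n) (α := ℂ)).sub hH

lemma idem_one_sub {M : Matrix n n ℂ} (hI : M * M = M) : (1 - M) * (1 - M) = 1 - M := by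
  rw [mul_sub, sub_mul, sub_mul, hI]; simp

lemma psd_diag_re_nonneg {M : Matrix n n ℂ} (hM : M.PosSemidef) (j : n) :
    0 ≤ (M j j).re := by
  have h := hM.diag_nonneg (i := j)
  exact (Complex.le_def.mp h).1

lemma psd_trace_re_nonneg {M : Matrix n n ℂ} (hM : M.PosSemidef) :
    0 ≤ (M.trace).re := by
  rw [Matrix.trace, Complex.re_sum]
  exact Finset.sum_nonneg fun j _ => psd_diag_re_nonneg hM j

open scoped MatrixOrder in
lemma trace_mul_psd_re_nonneg {A B : Matrix n n ℂ} (hA : A.PosSemidef) (hB : B.PosSemidef) :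
    0 ≤ ((A * B).trace).re := by
  obtain ⟨C, rfl⟩ : ∃ C : Matrix n n ℂ, A = Cᴴ * C :=
    CStarAlgebra.nonneg_iff_eq_star_mul_self.mp hA.nonneg
  have h1 : (Cᴴ * C * B).trace = (C * B * Cᴴ).trace :=
    (Matrix.trace_mul_cycle C B Cᴴ).symm
  rw [h1]
  exact psd_trace_re_nonneg (hB.mul_mul_conjTranspose_same C)


lemma CL {lam : n → ℝ} (hlam : ∀ j, 0 ≤ lam j) (k : ℕ) {s : Finset n}
    (hcard : s.card = min k (Fintype.card n))
    (hmax : ∀ t : Finset n, t.card = s.card → ∑ j ∈ t, lam j ≤ ∑ j ∈ s, lam j)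
    (c : n → ℝ) (hc0 : ∀ j, 0 ≤ c j) (hc1 : ∀ j, c j ≤ 1) (hck : ∑ j, c j ≤ (k : ℝ)) :
    ∑ j, c j * lam j ≤ ∑ j ∈ s, lam j := by
  have hcn : ∑ j, c j ≤ (Fintype.card n : ℝ) := by
    calc ∑ j, c j ≤ ∑ _j : n, (1:ℝ) := Finset.sum_le_sum (fun j _ => hc1 j)
    _ = (Fintype.card n : ℝ) := by simp
  have hsumc_le : ∑ j, c j ≤ (s.card : ℝ) := by
    rw [hcard]; push_cast; exact le_min hck hcn
  rcases s.eq_empty_or_nonempty with hs | hs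
  · have h0 : ∑ j, c j = 0 := by
      refine le_antisymm ?_ (Finset.sum_nonneg fun j _ => hc0 j)
      simpa [hs] using hsumc_le
    have hc : ∀ j ∈ Finset.univ, c j = 0 :=
      (Finset.sum_eq_zero_iff_of_nonneg (fun j _ => hc0 j)).mp h0
    have : ∑ j, c j * lam j = 0 :=
      Finset.sum_eq_zero fun j hj => by rw [hc j hj, zero_mul]
    rw [this, hs]; simp
  · obtain ⟨j0, hj0s, hj0min⟩ := s.exists_min_image lam hs
    set t := lam j0 with ht
    have ht0 : 0 ≤ t := hlam j0
    have hout : ∀ j, j ∉ s → lam j ≤ t := by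
      intro j hj
      by_contra hlt
      push_neg at hlt
      have hjne : j ∉ s.erase j0 := fun h => hj (Finset.mem_of_mem_erase h)
      have hcard' : (insert j (s.erase j0)).card = s.card := by
        rw [Finset.card_insert_of_notMem hjne, Finset.card_erase_of_mem hj0s]
        have : 1 ≤ s.card := Finset.card_pos.mpr hs
        omega
      have hsum : ∑ x ∈ insert j (s.erase j0), lam x
          = lam j + ((∑ x ∈ s, lam x) - lam j0) := by
        rw [Finset.sum_insert hjne, Finset.sum_erase_eq_sub hj0s]
      have hle := hmax _ hcard'
      rw [hsum] at hle
      linarith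
    have h1 : ∑ j ∈ s, c j * lam j ≤ ∑ j ∈ s, (lam j - t + c j * t) := by
      refine Finset.sum_le_sum fun j hj => ?_
      have h := mul_nonneg (sub_nonneg.mpr (hc1 j)) (sub_nonneg.mpr (hj0min j hj))
      nlinarith
    have h2 : ∑ j ∈ sᶜ, c j * lam j ≤ ∑ j ∈ sᶜ, c j * t := by
      refine Finset.sum_le_sum fun j hj => ?_
      have hj' : j ∉ s := by simpa using hj
      exact mul_le_mul_of_nonneg_left (hout j hj') (hc0 j)
    have e1 : ∑ j ∈ s, (lam j - t + c j * t)
        = (∑ j ∈ s, lam j) - s.card * t + (∑ j ∈ s, c j) * t := by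
      rw [Finset.sum_add_distrib, Finset.sum_sub_distrib, Finset.sum_const, ← Finset.sum_mul]
      push_cast; ring
    have e2 : ∑ j ∈ sᶜ, c j * t = (∑ j ∈ sᶜ, c j) * t := by
      rw [Finset.sum_mul]
    have htot : (∑ j ∈ s, c j) + ∑ j ∈ sᶜ, c j = ∑ j, c j :=
      Finset.sum_add_sum_compl s c
    have hsplit : ∑ j, c j * lam j
        = ∑ j ∈ s, c j * lam j + ∑ j ∈ sᶜ, c j * lam j :=
      (Finset.sum_add_sum_compl s _).symm
    have hprod : 0 ≤ t * ((s.card : ℝ) - ∑ j, c j) :=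
      mul_nonneg ht0 (sub_nonneg.mpr hsumc_le)
    nlinarith


lemma kyfan {A : Matrix n n ℂ} (hA : A.PosSemidef) (k : ℕ) :
    ∃ P : Matrix n n ℂ, P.IsHermitian ∧ P * P = P ∧ P.rank = min k (Fintype.card n) ∧
      ∀ X : Matrix n n ℂ, X.PosSemidef → (1 - X).PosSemidef → (X.trace).re ≤ (k : ℝ) →
        ((X * A).trace).re ≤ ((P * A).trace).re := by
  have hAh := hA.1
  set U : Matrix n n ℂ := (hAh.eigenvectorUnitary : Matrix n n ℂ) with hUdef
  set lam : n → ℝ := hAh.eigenvalues with hlamdef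
  have hlam0 : ∀ j, 0 ≤ lam j := fun j => hA.eigenvalues_nonneg j
  have hU1 : U * Uᴴ = 1 := by
    have := Matrix.mem_unitaryGroup_iff.mp (hAh.eigenvectorUnitary).2
    simpa [Matrix.star_eq_conjTranspose] using this
  have hU2 : Uᴴ * U = 1 := by
    have := Matrix.mem_unitaryGroup_iff'.mp (hAh.eigenvectorUnitary).2
    simpa [Matrix.star_eq_conjTranspose] using this
  set D : Matrix n n ℂ := Matrix.diagonal (RCLike.ofReal ∘ lam) with hDdef
  have hspec : A = U * D * Uᴴ := by
    have h := hAh.spectral_theorem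
    rw [Unitary.conjStarAlgAut_apply] at h
    exact h
  have hdetU : IsUnit U.det := by
    have h := congrArg Matrix.det hU1
    rw [Matrix.det_mul, Matrix.det_one] at h
    exact IsUnit.of_mul_eq_one _ h
  have hdetUH : IsUnit (Uᴴ).det := by
    have h := congrArg Matrix.det hU2
    rw [Matrix.det_mul, Matrix.det_one] at h
    exact IsUnit.of_mul_eq_one _ h
  -- choose the maximizing subset
  obtain ⟨s, hs_mem, hs_max⟩ := Finset.exists_max_image
    (Finset.powersetCard (min k (Fintype.card n)) Finset.univ)
    (fun tt => ∑ j ∈ tt, lam j)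
    (Finset.powersetCard_nonempty.mpr (by simp))
  have hcard : s.card = min k (Fintype.card n) := Finset.mem_powersetCard_univ.mp hs_mem
  have hmax : ∀ t : Finset n, t.card = s.card → ∑ j ∈ t, lam j ≤ ∑ j ∈ s, lam j := by
    intro t ht
    exact hs_max t (Finset.mem_powersetCard_univ.mpr (ht.trans hcard))
  set e : n → ℂ := fun j => if j ∈ s then 1 else 0 with hedef
  set P : Matrix n n ℂ := U * Matrix.diagonal e * Uᴴ with hPdef
  have hestar : star e = e := by
    funext j
    by_cases h : j ∈ s <;> simp [hedef, h]
  have hee : e * e = e := by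
    funext j
    by_cases h : j ∈ s <;> simp [hedef, h]
  have hPherm : P.IsHermitian := by
    show Pᴴ = P
    rw [hPdef]
    simp only [Matrix.conjTranspose_mul, Matrix.conjTranspose_conjTranspose,
      Matrix.diagonal_conjTranspose, hestar, Matrix.mul_assoc]
  have hP2 : P * P = P := by
    rw [hPdef]
    simp only [Matrix.mul_assoc]
    rw [show Uᴴ * (U * (Matrix.diagonal e * Uᴴ)) = Matrix.diagonal e * Uᴴ by
      rw [← Matrix.mul_assoc, hU2, Matrix.one_mul]]
    rw [show Matrix.diagonal e * (Matrix.diagonal e * Uᴴ) = Matrix.diagonal e * Uᴴ by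
      rw [← Matrix.mul_assoc, Matrix.diagonal_mul_diagonal]
      congr 1
      exact congrArg Matrix.diagonal hee]
  have hPrank : P.rank = min k (Fintype.card n) := by
    rw [hPdef, Matrix.mul_assoc, Matrix.rank_mul_eq_right_of_isUnit_det U _ hdetU,
      Matrix.rank_mul_eq_left_of_isUnit_det Uᴴ (Matrix.diagonal e) hdetUH,
      Matrix.rank_diagonal]
    have he : ∀ j, e j ≠ 0 ↔ j ∈ s := by
      intro j; by_cases h : j ∈ s <;> simp [hedef, h]
    rw [Fintype.card_subtype]
    rw [show Finset.univ.filter (fun j => e j ≠ 0) = s by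
      rw [Finset.filter_congr (fun j _ => by rw [he j])]
      exact Finset.filter_univ_mem s]
    exact hcard
  -- trace identity
  have key : ∀ M : Matrix n n ℂ,
      ((M * A).trace).re = ∑ j, ((Uᴴ * M * U) j j).re * lam j := by
    intro M
    have h1 : M * A = (M * U * D) * Uᴴ := by
      rw [hspec]; simp only [Matrix.mul_assoc]
    have h2 : (M * A).trace = ((Uᴴ * M * U) * D).trace := by
      rw [h1, Matrix.trace_mul_comm]
      congr 1
      simp only [Matrix.mul_assoc]
    rw [h2, hDdef]
    rw [Matrix.trace]
    rw [Complex.re_sum]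
    refine Finset.sum_congr rfl fun j _ => ?_
    simp [Matrix.diag, Matrix.mul_diagonal, Complex.mul_re]
  refine ⟨P, hPherm, hP2, hPrank, ?_⟩
  intro X hX hX1 hXtr
  have hUPU : Uᴴ * P * U = Matrix.diagonal e := by
    rw [hPdef]
    simp only [Matrix.mul_assoc]
    rw [show U * (Matrix.diagonal e * (Uᴴ * U)) = U * Matrix.diagonal e by
      rw [hU2, Matrix.mul_one]]
    rw [← Matrix.mul_assoc, hU2, Matrix.one_mul]
  have hRHS : ((P * A).trace).re = ∑ j ∈ s, lam j := by
    rw [key P, hUPU]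
    rw [show ∑ j, (Matrix.diagonal e j j).re * lam j = ∑ j, if j ∈ s then lam j else 0 by
      refine Finset.sum_congr rfl fun j _ => ?_
      by_cases h : j ∈ s <;> simp [Matrix.diagonal_apply_eq, hedef, h]]
    simp [Finset.sum_ite_mem]
  rw [key X, hRHS]
  set Y : Matrix n n ℂ := Uᴴ * X * U with hYdef
  have hY : Y.PosSemidef := hX.conjTranspose_mul_mul_same U
  set c : n → ℝ := fun j => (Y j j).re with hcdef
  have hc0 : ∀ j, 0 ≤ c j := fun j => psd_diag_re_nonneg hY j
  have h1X : Uᴴ * (1 - X) * U = 1 - Y := by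
    rw [Matrix.mul_sub, Matrix.sub_mul, Matrix.mul_one, hU2, hYdef]
  have hY1 : (1 - Y).PosSemidef := by
    rw [← h1X]; exact hX1.conjTranspose_mul_mul_same U
  have hc1 : ∀ j, c j ≤ 1 := by
    intro j
    have := psd_diag_re_nonneg hY1 j
    simp only [Matrix.sub_apply, Matrix.one_apply_eq, Complex.sub_re, Complex.one_re] at this
    linarith
  have hck : ∑ j, c j ≤ (k : ℝ) := by
    have htr : Y.trace = X.trace := by
      rw [hYdef, Matrix.trace_mul_cycle, hU1, Matrix.one_mul]
    have : ∑ j, c j = (Y.trace).re := by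
      rw [Matrix.trace, Complex.re_sum]; rfl
    rw [this, htr]; exact hXtr
  exact CL hlam0 k hcard hmax c hc0 hc1 hck


lemma support_proj {Y : Matrix n n ℂ} (hY : Y.PosSemidef) :
    ∃ Pi : Matrix n n ℂ, Pi.IsHermitian ∧ Pi * Pi = Pi ∧ Pi * Y = Y ∧
      Pi.trace = (Y.rank : ℂ) := by
  classical
  have hYh := hY.1
  set U : Matrix n n ℂ := (hYh.eigenvectorUnitary : Matrix n n ℂ) with hUdef
  set mu : n → ℝ := hYh.eigenvalues with hmudef
  have hU1 : U * Uᴴ = 1 := by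
    have := Matrix.mem_unitaryGroup_iff.mp (hYh.eigenvectorUnitary).2
    simpa [Matrix.star_eq_conjTranspose] using this
  have hU2 : Uᴴ * U = 1 := by
    have := Matrix.mem_unitaryGroup_iff'.mp (hYh.eigenvectorUnitary).2
    simpa [Matrix.star_eq_conjTranspose] using this
  set D : Matrix n n ℂ := Matrix.diagonal (RCLike.ofReal ∘ mu) with hDdef
  have hspec : Y = U * D * Uᴴ := by
    have h := hYh.spectral_theorem
    rw [Unitary.conjStarAlgAut_apply] at h
    exact h
  set e : n → ℂ := fun j => if mu j = 0 then 0 else 1 with hedef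
  set Pi : Matrix n n ℂ := U * Matrix.diagonal e * Uᴴ with hPdef
  have hestar : star e = e := by
    funext j; by_cases h : mu j = 0 <;> simp [hedef, h]
  have hee : e * e = e := by
    funext j; by_cases h : mu j = 0 <;> simp [hedef, h]
  have hPherm : Pi.IsHermitian := by
    show Piᴴ = Pi
    rw [hPdef]
    simp only [Matrix.conjTranspose_mul, Matrix.conjTranspose_conjTranspose,
      Matrix.diagonal_conjTranspose, hestar, Matrix.mul_assoc]
  have hP2 : Pi * Pi = Pi := by
    rw [hPdef]
    simp only [Matrix.mul_assoc]
    rw [show Uᴴ * (U * (Matrix.diagonal e * Uᴴ)) = Matrix.diagonal e * Uᴴ by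
      rw [← Matrix.mul_assoc, hU2, Matrix.one_mul]]
    rw [show Matrix.diagonal e * (Matrix.diagonal e * Uᴴ) = Matrix.diagonal e * Uᴴ by
      rw [← Matrix.mul_assoc, Matrix.diagonal_mul_diagonal]
      congr 1
      exact congrArg Matrix.diagonal hee]
  have hPY : Pi * Y = Y := by
    rw [hPdef, hspec]
    simp only [Matrix.mul_assoc]
    rw [show Uᴴ * (U * (D * Uᴴ)) = D * Uᴴ by
      rw [← Matrix.mul_assoc, hU2, Matrix.one_mul]]
    rw [show Matrix.diagonal e * (D * Uᴴ) = D * Uᴴ by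
      rw [← Matrix.mul_assoc, hDdef, Matrix.diagonal_mul_diagonal]
      congr 1
      exact congrArg Matrix.diagonal (funext fun j => by
        by_cases h : mu j = 0 <;> simp [hedef, h])]
  have htrace : Pi.trace = (Y.rank : ℂ) := by
    have h1 : Pi.trace = (Matrix.diagonal e).trace := by
      rw [hPdef, Matrix.trace_mul_cycle, hU2, Matrix.one_mul]
    rw [h1, Matrix.trace_diagonal, hYh.rank_eq_card_non_zero_eigs]
    rw [show ∑ j, e j = ∑ j, if mu j ≠ 0 then (1:ℂ) else 0 by
      refine Finset.sum_congr rfl fun j _ => ?_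
      by_cases h : mu j = 0 <;> simp [hedef, h]]
    rw [Finset.sum_boole, Fintype.card_subtype]
  exact ⟨Pi, hPherm, hP2, hPY, htrace⟩

end NKaux


set_option maxHeartbeats 1000000

/-- Partial trace over the second tensor factor. -/
noncomputable def ptrace2 {dA dB : ℕ}
    (ρ : Matrix (Fin dA × Fin dB) (Fin dA × Fin dB) ℂ) : Matrix (Fin dA) (Fin dA) ℂ :=
  Matrix.of fun a a' => ∑ b, ρ (a, b) (a', b)

theorem stmt_7 {dA dB : ℕ}
    (ρ : Matrix (Fin dA × Fin dB) (Fin dA × Fin dB) ℂ)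
    (hρ : ρ.PosSemidef) (htr : ρ.trace = 1)
    (hsep : ∃ (N : ℕ) (p : Fin N → ℝ)
        (ρA : Fin N → Matrix (Fin dA) (Fin dA) ℂ)
        (ρB : Fin N → Matrix (Fin dB) (Fin dB) ℂ),
      (∀ i, 0 ≤ p i) ∧ (∑ i, p i = 1) ∧
      (∀ i, (ρA i).PosSemidef ∧ (ρA i).trace = 1) ∧
      (∀ i, (ρB i).PosSemidef ∧ (ρB i).trace = 1) ∧
      ρ = ∑ i, (p i : ℂ) • (ρA i ⊗ₖ ρB i))
    (k : ℕ) (hk : 0 < k)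
    (Q : Matrix (Fin dA × Fin dB) (Fin dA × Fin dB) ℂ)
    (hQherm : Q.IsHermitian) (hQproj : Q * Q = Q) (hQrank : Q.rank = k) :
    ∃ P : Matrix (Fin dA) (Fin dA) ℂ,
      P.IsHermitian ∧ P * P = P ∧ P.rank = min k dA ∧
      ((Q * ρ).trace).re ≤ ((P * ptrace2 ρ).trace).re := by
  classical
  obtain ⟨N, p, σ, τ, hp, hp1, hσ, hτ, hρeq⟩ := hsep
  -- spectral data of the local states
  set us : Fin N → Matrix (Fin dA) (Fin dA) ℂ :=
    fun i => ((hσ i).1.1.eigenvectorUnitary : Matrix (Fin dA) (Fin dA) ℂ) with husdef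
  set sv : Fin N → Fin dA → ℝ := fun i => (hσ i).1.1.eigenvalues with hsvdef
  set vs : Fin N → Matrix (Fin dB) (Fin dB) ℂ :=
    fun i => ((hτ i).1.1.eigenvectorUnitary : Matrix (Fin dB) (Fin dB) ℂ) with hvsdef
  set tv : Fin N → Fin dB → ℝ := fun i => (hτ i).1.1.eigenvalues with htvdef
  have hsv0 : ∀ i a, 0 ≤ sv i a := fun i a => (hσ i).1.eigenvalues_nonneg a
  have htv0 : ∀ i b, 0 ≤ tv i b := fun i b => (hτ i).1.eigenvalues_nonneg b
  -- the ensemble index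
  set q : Fin N × Fin dA × Fin dB → ℝ := fun α => p α.1 * sv α.1 α.2.1 * tv α.1 α.2.2 with hqdef
  have hq0 : ∀ α, 0 ≤ q α := fun α =>
    mul_nonneg (mul_nonneg (hp α.1) (hsv0 α.1 α.2.1)) (htv0 α.1 α.2.2)
  set W : Matrix (Fin dA × Fin dB) (Fin N × Fin dA × Fin dB) ℂ :=
    Matrix.of fun ab α =>
      (Real.sqrt (q α) : ℂ) * us α.1 ab.1 α.2.1 * vs α.1 ab.2 α.2.2 with hWdef
  set V : Matrix (Fin dA) (Fin N × Fin dA × Fin dB) ℂ :=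
    Matrix.of fun a α => (Real.sqrt (q α) : ℂ) * us α.1 a α.2.1 with hVdef
  set D : Fin dB → Matrix (Fin N × Fin dA × Fin dB) (Fin N × Fin dA × Fin dB) ℂ :=
    fun b => Matrix.diagonal fun α => star (vs α.1 b α.2.2) with hDdef
  -- spectral facts
  have hσspec : ∀ i, σ i = us i * Matrix.diagonal (RCLike.ofReal ∘ sv i) * (us i)ᴴ := by
    intro i
    simpa [Matrix.star_eq_conjTranspose] using (hσ i).1.1.spectral_theorem
  have hτspec : ∀ i, τ i = vs i * Matrix.diagonal (RCLike.ofReal ∘ tv i) * (vs i)ᴴ := by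
    intro i
    simpa [Matrix.star_eq_conjTranspose] using (hτ i).1.1.spectral_theorem
  have hσentry : ∀ i a a', σ i a a'
      = ∑ a0, us i a a0 * ((sv i a0 : ℝ) : ℂ) * star (us i a' a0) := by
    intro i a a'
    conv_lhs => rw [hσspec i]
    rw [Matrix.mul_apply]
    refine Finset.sum_congr rfl fun a0 _ => ?_
    rw [Matrix.mul_diagonal, Matrix.conjTranspose_apply]
    rfl
  have hτentry : ∀ i b b', τ i b b'
      = ∑ b0, vs i b b0 * ((tv i b0 : ℝ) : ℂ) * star (vs i b' b0) := by
    intro i b b'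
    conv_lhs => rw [hτspec i]
    rw [Matrix.mul_apply]
    refine Finset.sum_congr rfl fun b0 _ => ?_
    rw [Matrix.mul_diagonal, Matrix.conjTranspose_apply]
    rfl
  have hvunit0 : ∀ i, (vs i)ᴴ * (vs i) = 1 := by
    intro i
    have := Matrix.mem_unitaryGroup_iff'.mp ((hτ i).1.1.eigenvectorUnitary).2
    simpa [Matrix.star_eq_conjTranspose] using this
  have ht_sum : ∀ i, ∑ b0, ((tv i b0 : ℝ) : ℂ) = 1 := by
    intro i
    have h1 : (τ i).trace = ∑ b0, ((tv i b0 : ℝ) : ℂ) := by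
      conv_lhs => rw [hτspec i]
      rw [Matrix.trace_mul_cycle, hvunit0 i, Matrix.one_mul, Matrix.trace_diagonal]
      rfl
    rw [← h1, (hτ i).2]
  have htraceτ : ∀ i, ∑ b, τ i b b = (1 : ℂ) := by
    intro i
    have : ∑ b, τ i b b = (τ i).trace := rfl
    rw [this, (hτ i).2]
  -- the structural identities
  have hρW : ρ = W * Wᴴ := by
    ext ab ab'
    have hR : (W * Wᴴ) ab ab' = ∑ α : Fin N × Fin dA × Fin dB, W ab α * star (W ab' α) := by
      simp [Matrix.mul_apply, Matrix.conjTranspose_apply]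
    rw [hρeq, hR, Fintype.sum_prod_type]
    simp only [Matrix.sum_apply, Matrix.smul_apply, Matrix.kroneckerMap_apply, smul_eq_mul]
    refine Finset.sum_congr rfl fun i _ => ?_
    rw [hσentry i ab.1 ab'.1, hτentry i ab.2 ab'.2, Finset.sum_mul_sum, Finset.mul_sum,
      Fintype.sum_prod_type]
    refine Finset.sum_congr rfl fun a0 _ => ?_
    rw [Finset.mul_sum]
    refine Finset.sum_congr rfl fun b0 _ => ?_
    have hq' : q (i, a0, b0) = p i * sv i a0 * tv i b0 := by rw [hqdef]
    have hsq : ((Real.sqrt (q (i, a0, b0)) : ℝ) : ℂ) * ((Real.sqrt (q (i, a0, b0)) : ℝ) : ℂ)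
        = ((p i : ℝ) : ℂ) * ((sv i a0 : ℝ) : ℂ) * ((tv i b0 : ℝ) : ℂ) := by
      rw [← Complex.ofReal_mul, Real.mul_self_sqrt (hq0 _), hq']
      push_cast
      ring
    simp only [hWdef, Matrix.of_apply, star_mul', Complex.star_def, Complex.conj_ofReal]
    linear_combination (-(us i ab.1 a0 * vs i ab.2 b0 * (starRingEnd ℂ) (us i ab'.1 a0)
      * (starRingEnd ℂ) (vs i ab'.2 b0))) * hsq
  have hAV : ptrace2 ρ = V * Vᴴ := by
    ext a a'
    have hL : ptrace2 ρ a a' = ∑ i, (p i : ℂ) * σ i a a' := by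
      simp only [ptrace2, Matrix.of_apply]
      rw [hρeq]
      simp only [Matrix.sum_apply, Matrix.smul_apply, Matrix.kroneckerMap_apply, smul_eq_mul]
      rw [Finset.sum_comm]
      refine Finset.sum_congr rfl fun i _ => ?_
      have e : ∀ b, (p i : ℂ) * (σ i a a' * τ i b b)
          = ((p i : ℂ) * σ i a a') * τ i b b := fun b => by ring
      rw [Finset.sum_congr rfl (fun b _ => e b), ← Finset.mul_sum, htraceτ i, mul_one]
    have hR : (V * Vᴴ) a a' = ∑ i, (p i : ℂ) * σ i a a' := by
      have h0 : (V * Vᴴ) a a' = ∑ α : Fin N × Fin dA × Fin dB, V a α * star (V a' α) := by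
        simp [Matrix.mul_apply, Matrix.conjTranspose_apply]
      rw [h0, Fintype.sum_prod_type]
      refine Finset.sum_congr rfl fun i _ => ?_
      rw [hσentry i a a', Finset.mul_sum, Fintype.sum_prod_type]
      refine Finset.sum_congr rfl fun a0 _ => ?_
      have e : ∀ b0 : Fin dB, V a (i, a0, b0) * star (V a' (i, a0, b0))
          = (((p i : ℝ) : ℂ) * ((sv i a0 : ℝ) : ℂ) * (us i a a0 * star (us i a' a0)))
            * ((tv i b0 : ℝ) : ℂ) := by
        intro b0
        have hq' : q (i, a0, b0) = p i * sv i a0 * tv i b0 := by rw [hqdef]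
        have hsq : ((Real.sqrt (q (i, a0, b0)) : ℝ) : ℂ)
              * ((Real.sqrt (q (i, a0, b0)) : ℝ) : ℂ)
            = ((p i : ℝ) : ℂ) * ((sv i a0 : ℝ) : ℂ) * ((tv i b0 : ℝ) : ℂ) := by
          rw [← Complex.ofReal_mul, Real.mul_self_sqrt (hq0 _), hq']
          push_cast
          ring
        simp only [hVdef, Matrix.of_apply, star_mul', Complex.star_def, Complex.conj_ofReal]
        linear_combination (us i a a0 * (starRingEnd ℂ) (us i a' a0)) * hsq <;>
          linear_combination (-(us i a a0 * (starRingEnd ℂ) (us i a' a0))) * hsq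
      rw [Finset.sum_congr rfl (fun b0 _ => e b0), ← Finset.mul_sum, ht_sum i, mul_one]
      push_cast
      ring
    rw [hL, hR]
  set B : Matrix (Fin N × Fin dA × Fin dB) (Fin N × Fin dA × Fin dB) ℂ := Vᴴ * V with hBdef
  have hGdec : Wᴴ * W = ∑ b, D b * B * (D b)ᴴ := by
    ext α α'
    have hL : (Wᴴ * W) α α' = ∑ ab : Fin dA × Fin dB, star (W ab α) * W ab α' := by
      simp [Matrix.mul_apply, Matrix.conjTranspose_apply]
    rw [hL, Fintype.sum_prod_type, Finset.sum_comm, Matrix.sum_apply]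
    refine Finset.sum_congr rfl fun b _ => ?_
    have hDb : D b = Matrix.diagonal fun γ : Fin N × Fin dA × Fin dB =>
        star (vs γ.1 b γ.2.2) := congrFun hDdef b
    have hDbH : (D b)ᴴ = Matrix.diagonal fun γ : Fin N × Fin dA × Fin dB =>
        vs γ.1 b γ.2.2 := by
      rw [hDb, Matrix.diagonal_conjTranspose]
      exact congrArg Matrix.diagonal (funext fun γ => by simp)
    have hR : (D b * B * (D b)ᴴ) α α'
        = star (vs α.1 b α.2.2) * B α α' * vs α'.1 b α'.2.2 := by
      rw [hDbH, Matrix.mul_diagonal, hDb, Matrix.diagonal_mul]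
    rw [hR]
    have hB : B α α' = ∑ a, star (V a α) * V a α' := by
      simp [hBdef, Matrix.mul_apply, Matrix.conjTranspose_apply]
    rw [hB, Finset.mul_sum, Finset.sum_mul]
    refine Finset.sum_congr rfl fun a _ => ?_
    simp only [hWdef, hVdef, Matrix.of_apply, star_mul']
    ring
  have hvunit : ∀ i, (vs i)ᴴ * (vs i) = 1 := by
    intro i
    have := Matrix.mem_unitaryGroup_iff'.mp ((hτ i).1.1.eigenvectorUnitary).2
    simpa [Matrix.star_eq_conjTranspose] using this
  have hvcol : ∀ (i : Fin N) (b0 : Fin dB), ∑ b, star (vs i b b0) * vs i b b0 = 1 := by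
    intro i b0
    have h := congrFun (congrFun (hvunit i) b0) b0
    simpa [Matrix.mul_apply, Matrix.conjTranspose_apply, Matrix.one_apply_eq] using h
  have hDsum : ∑ b, D b * (D b)ᴴ = (1 : Matrix (Fin N × Fin dA × Fin dB) (Fin N × Fin dA × Fin dB) ℂ) := by
    ext α α'
    simp only [Matrix.sum_apply, hDdef, Matrix.diagonal_conjTranspose,
      Matrix.diagonal_mul_diagonal, Matrix.diagonal_apply, Matrix.one_apply]
    by_cases h : α = α'
    · subst h
      simp only [if_pos rfl]
      calc ∑ b, star (vs α.1 b α.2.2) * star (star (vs α.1 b α.2.2))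
          = ∑ b, star (vs α.1 b α.2.2) * vs α.1 b α.2.2 := by
            refine Finset.sum_congr rfl fun b _ => ?_
            rw [star_star]
      _ = 1 := hvcol α.1 α.2.2
    · simp [h]
  have hDsum' : ∑ b, (D b)ᴴ * D b = (1 : Matrix (Fin N × Fin dA × Fin dB) (Fin N × Fin dA × Fin dB) ℂ) := by
    ext α α'
    simp only [Matrix.sum_apply, hDdef, Matrix.diagonal_conjTranspose,
      Matrix.diagonal_mul_diagonal, Matrix.diagonal_apply, Matrix.one_apply]
    by_cases h : α = α'
    · subst h
      simp only [if_pos rfl]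
      calc ∑ b, star (star (vs α.1 b α.2.2)) * star (vs α.1 b α.2.2)
          = ∑ b, star (vs α.1 b α.2.2) * vs α.1 b α.2.2 := by
            refine Finset.sum_congr rfl fun b _ => ?_
            rw [star_star, mul_comm]
      _ = 1 := hvcol α.1 α.2.2
    · simp [h]
  -- basic positivity facts
  have hQpsd : Q.PosSemidef := NKaux.psd_of_herm_idem hQherm hQproj
  have h1Qpsd : (1 - Q).PosSemidef :=
    NKaux.psd_of_herm_idem (NKaux.herm_one_sub hQherm) (NKaux.idem_one_sub hQproj)
  set Y1 : Matrix (Fin N × Fin dA × Fin dB) (Fin N × Fin dA × Fin dB) ℂ := Wᴴ * Q * W with hY1def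
  have hY1psd : Y1.PosSemidef := hQpsd.conjTranspose_mul_mul_same W
  have htr1 : (Q * ρ).trace = Y1.trace := by
    rw [hρW, ← Matrix.mul_assoc, Matrix.trace_mul_comm, ← Matrix.mul_assoc]
  have hY1rank : Y1.rank ≤ k := by
    have hform : Y1 = (Q * W)ᴴ * (Q * W) := by
      rw [Matrix.conjTranspose_mul, hQherm.eq, hY1def]
      calc Wᴴ * Q * W = Wᴴ * (Q * Q) * W := by rw [hQproj]
      _ = Wᴴ * Q * (Q * W) := by simp only [Matrix.mul_assoc]
    rw [hform, Matrix.rank_conjTranspose_mul_self]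
    calc (Q * W).rank ≤ Q.rank := Matrix.rank_mul_le_left Q W
    _ = k := hQrank
  obtain ⟨P1, hP1h, hP1i, hP1Y, hP1tr⟩ := NKaux.support_proj hY1psd
  have hP1psd : P1.PosSemidef := NKaux.psd_of_herm_idem hP1h hP1i
  have h1P1psd : (1 - P1).PosSemidef :=
    NKaux.psd_of_herm_idem (NKaux.herm_one_sub hP1h) (NKaux.idem_one_sub hP1i)
  set G : Matrix (Fin N × Fin dA × Fin dB) (Fin N × Fin dA × Fin dB) ℂ := Wᴴ * W with hGdef
  have hstep1 : (Y1.trace).re ≤ ((P1 * G).trace).re := by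
    have hGY : (G - Y1).PosSemidef := by
      have h : G - Y1 = Wᴴ * (1 - Q) * W := by
        rw [Matrix.mul_sub, Matrix.sub_mul, Matrix.mul_one]
      rw [h]
      exact h1Qpsd.conjTranspose_mul_mul_same W
    have h := NKaux.trace_mul_psd_re_nonneg hP1psd hGY
    have hsplit : (P1 * G).trace = (P1 * Y1).trace + (P1 * (G - Y1)).trace := by
      rw [← Matrix.trace_add, ← Matrix.mul_add, add_sub_cancel]
    rw [hsplit, hP1Y, Complex.add_re]
    linarith
  set Z : Matrix (Fin N × Fin dA × Fin dB) (Fin N × Fin dA × Fin dB) ℂ := ∑ b, (D b)ᴴ * P1 * D b with hZdef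
  have hstep2 : (P1 * G).trace = (Z * B).trace := by
    rw [hGdec, Finset.mul_sum, Matrix.trace_sum, hZdef, Finset.sum_mul,
      Matrix.trace_sum]
    refine Finset.sum_congr rfl fun b _ => ?_
    rw [show P1 * (D b * B * (D b)ᴴ) = P1 * (D b * B) * (D b)ᴴ by
        simp only [Matrix.mul_assoc],
      Matrix.trace_mul_cycle]
    congr 1
    simp only [Matrix.mul_assoc]
  have hZpsd : Z.PosSemidef := by
    rw [hZdef]
    refine Finset.sum_induction _ _ (fun a b ha hb => ha.add hb) Matrix.PosSemidef.zero ?_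
    exact fun b _ => hP1psd.conjTranspose_mul_mul_same (D b)
  have h1Zpsd : (1 - Z).PosSemidef := by
    have h : 1 - Z = ∑ b, (D b)ᴴ * (1 - P1) * D b := by
      have h2 : 1 - Z = ∑ b, ((D b)ᴴ * D b - (D b)ᴴ * P1 * D b) := by
        rw [Finset.sum_sub_distrib, hDsum', hZdef]
      rw [h2]
      refine Finset.sum_congr rfl fun b _ => ?_
      rw [Matrix.mul_sub, Matrix.sub_mul, Matrix.mul_one]
    rw [h]
    refine Finset.sum_induction _ _ (fun a b ha hb => ha.add hb) Matrix.PosSemidef.zero ?_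
    exact fun b _ => h1P1psd.conjTranspose_mul_mul_same (D b)
  have hZtr : (Z.trace).re ≤ (k : ℝ) := by
    have h1 : Z.trace = P1.trace := by
      rw [hZdef, Matrix.trace_sum]
      have e : ∀ b : Fin dB, ((D b)ᴴ * P1 * D b).trace
          = (P1 * (D b * (D b)ᴴ)).trace := by
        intro b
        rw [← Matrix.mul_assoc]
        exact (Matrix.trace_mul_cycle P1 (D b) (D b)ᴴ).symm
      rw [Finset.sum_congr rfl (fun b _ => e b), ← Matrix.trace_sum, ← Finset.mul_sum,
        hDsum, Matrix.mul_one]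
    rw [h1, hP1tr]
    simp only [Complex.natCast_re]
    exact_mod_cast hY1rank
  have hBpsd : B.PosSemidef := Matrix.posSemidef_conjTranspose_mul_self V
  obtain ⟨PB, hPBh, hPBi, hPBrank, hPBopt⟩ := NKaux.kyfan hBpsd k
  have hZB : ((Z * B).trace).re ≤ ((PB * B).trace).re := hPBopt Z hZpsd h1Zpsd hZtr
  set Y2 : Matrix (Fin dA) (Fin dA) ℂ := V * PB * Vᴴ with hY2def
  have hPBpsd : PB.PosSemidef := NKaux.psd_of_herm_idem hPBh hPBi
  have hY2psd : Y2.PosSemidef := hPBpsd.mul_mul_conjTranspose_same V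
  have htr2 : (PB * B).trace = Y2.trace := by
    rw [hBdef, ← Matrix.mul_assoc, Matrix.trace_mul_comm, ← Matrix.mul_assoc]
  have hY2rank : Y2.rank ≤ k := by
    calc Y2.rank ≤ (V * PB).rank := Matrix.rank_mul_le_left (V * PB) Vᴴ
    _ ≤ PB.rank := Matrix.rank_mul_le_right V PB
    _ ≤ k := by rw [hPBrank]; exact min_le_left _ _
  obtain ⟨P2, hP2h, hP2i, hP2Y, hP2tr⟩ := NKaux.support_proj hY2psd
  have hP2psd : P2.PosSemidef := NKaux.psd_of_herm_idem hP2h hP2i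
  have h1P2psd : (1 - P2).PosSemidef :=
    NKaux.psd_of_herm_idem (NKaux.herm_one_sub hP2h) (NKaux.idem_one_sub hP2i)
  set ρA' : Matrix (Fin dA) (Fin dA) ℂ := V * Vᴴ with hρA'def
  have hstep4 : (Y2.trace).re ≤ ((P2 * ρA').trace).re := by
    have hGY : (ρA' - Y2).PosSemidef := by
      have h : ρA' - Y2 = V * (1 - PB) * Vᴴ := by
        rw [Matrix.mul_sub, Matrix.sub_mul, Matrix.mul_one]
      rw [h]
      exact (NKaux.psd_of_herm_idem (NKaux.herm_one_sub hPBh)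
        (NKaux.idem_one_sub hPBi)).mul_mul_conjTranspose_same V
    have h := NKaux.trace_mul_psd_re_nonneg hP2psd hGY
    have hsplit : (P2 * ρA').trace = (P2 * Y2).trace + (P2 * (ρA' - Y2)).trace := by
      rw [← Matrix.trace_add, ← Matrix.mul_add, add_sub_cancel]
    rw [hsplit, hP2Y, Complex.add_re]
    linarith
  have hρA'psd : ρA'.PosSemidef := Matrix.posSemidef_self_mul_conjTranspose V
  obtain ⟨P, hPh, hPi, hPrank, hPopt⟩ := NKaux.kyfan hρA'psd k
  have hP2trk : ((P2.trace)).re ≤ (k : ℝ) := by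
    rw [hP2tr]
    simp only [Complex.natCast_re]
    exact_mod_cast hY2rank
  have hfinal : ((P2 * ρA').trace).re ≤ ((P * ρA').trace).re :=
    hPopt P2 hP2psd h1P2psd hP2trk
  refine ⟨P, hPh, hPi, ?_, ?_⟩
  · rw [hPrank, Fintype.card_fin]
  · rw [hAV, htr1]
    calc (Y1.trace).re ≤ ((P1 * G).trace).re := hstep1
    _ = ((Z * B).trace).re := by rw [hstep2]
    _ ≤ ((PB * B).trace).re := hZB
    _ = (Y2.trace).re := by rw [htr2]
    _ ≤ ((P2 * ρA').trace).re := hstep4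
    _ ≤ ((P * ρA').trace).re := hfinal
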